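/- Let K ≥ 2, α ∈ (0,1), γ ≥ 6, L ∈ ℝ^K, h ∈ [−1,1], and let β ∈ ℝ^K have all coordinates positive. Let x'_1 > 0 satisfy 4·x'_1 ≥ x_1. Suppose x minimizes G_{L,β,γ} and y minimizes G_{L+(h/x'_1)e_1, β, γ}. Then y_1 ≤ 3·x_1. -/

import Mathlib

open Finset

/-- The coordinate-wise hybrid objective
`G_{L,β,γ}(p) = ⟨L,p⟩ + Σᵢ βᵢ(−pᵢ^α/α + (1−pᵢ)ln(1−pᵢ) + pᵢ) − γ Σᵢ ln pᵢ`. -/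
noncomputable def hybridG {K : ℕ} (α γ : ℝ) (β L p : Fin K → ℝ) : ℝ :=
  (∑ i, L i * p i) +
    (∑ i, β i * (-(p i ^ α) / α + (1 - p i) * Real.log (1 - p i) + p i)) -
    γ * ∑ i, Real.log (p i)

/-- The domain `{p ∈ Δ_K : 0 < pᵢ < 1 for all i}`. -/
def openSimplex {K : ℕ} (p : Fin K → ℝ) : Prop :=
  (∀ i, 0 < p i ∧ p i < 1) ∧ ∑ i, p i = 1

/-- `x` minimizes `G_{L,β,γ}` over the domain. -/
def MinimizesG {K : ℕ} (α γ : ℝ) (β L x : Fin K → ℝ) : Prop :=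
  openSimplex x ∧ ∀ p : Fin K → ℝ, openSimplex p → hybridG α γ β L x ≤ hybridG α γ β L p

noncomputable def psiFn (α z : ℝ) : ℝ := -(z ^ α) / α + (1 - z) * Real.log (1 - z) + z

/-- pairwise convexity inequality for psiFn -/
lemma psi_pair {α p q t : ℝ} (hα0 : 0 < α) (hα1 : α < 1)
    (hp0 : 0 < p) (hp1 : p < 1) (hq0 : 0 < q) (hq1 : q < 1)
    (ht0 : 0 ≤ t) (ht1 : t ≤ 1) :
    psiFn α ((1-t)*p + t*q) + psiFn α ((1-t)*q + t*p) ≤ psiFn α p + psiFn α q := by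
  have hw : (0:ℝ) ≤ 1 - t := by linarith
  have hws : (1 - t) + t = 1 := by ring
  -- rpow concavity
  have hc := Real.concaveOn_rpow hα0.le hα1.le
  have h1 := hc.2 (Set.mem_Ici.2 hp0.le) (Set.mem_Ici.2 hq0.le) hw ht0 hws
  have h2 := hc.2 (Set.mem_Ici.2 hq0.le) (Set.mem_Ici.2 hp0.le) hw ht0 hws
  simp only [smul_eq_mul] at h1 h2
  -- mul_log convexity at 1-p, 1-q
  have hm := Real.convexOn_mul_log
  have h3 := hm.2 (Set.mem_Ici.2 (by linarith : (0:ℝ) ≤ 1 - p))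
    (Set.mem_Ici.2 (by linarith : (0:ℝ) ≤ 1 - q)) hw ht0 hws
  have h4 := hm.2 (Set.mem_Ici.2 (by linarith : (0:ℝ) ≤ 1 - q))
    (Set.mem_Ici.2 (by linarith : (0:ℝ) ≤ 1 - p)) hw ht0 hws
  simp only [smul_eq_mul] at h3 h4
  have e3 : (1-t)*(1-p) + t*(1-q) = 1 - ((1-t)*p + t*q) := by ring
  have e4 : (1-t)*(1-q) + t*(1-p) = 1 - ((1-t)*q + t*p) := by ring
  rw [e3] at h3
  rw [e4] at h4
  -- divide rpow part by α
  have hinv : (0:ℝ) ≤ α⁻¹ := by positivity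
  have h5 : -(((1-t)*p + t*q) ^ α) * α⁻¹ ≤ -((1-t)*(p^α) + t*(q^α)) * α⁻¹ :=
    mul_le_mul_of_nonneg_right (by linarith) hinv
  have h6 : -(((1-t)*q + t*p) ^ α) * α⁻¹ ≤ -((1-t)*(q^α) + t*(p^α)) * α⁻¹ :=
    mul_le_mul_of_nonneg_right (by linarith) hinv
  simp only [psiFn, div_eq_mul_inv]
  nlinarith [h3, h4, h5, h6]

/-- pairwise log inequality -/
lemma log_pair {p q t : ℝ} (hp0 : 0 < p) (hq0 : 0 < q) (ht0 : 0 ≤ t) (ht1 : t ≤ 1) :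
    Real.log p + Real.log q ≤ Real.log ((1-t)*p + t*q) + Real.log ((1-t)*q + t*p) := by
  have hc1 : 0 < (1-t)*p + t*q := by
    rcases eq_or_lt_of_le ht1 with rfl | h
    · simpa using hq0
    · have : 0 < 1 - t := by linarith
      positivity
  have hc2 : 0 < (1-t)*q + t*p := by
    rcases eq_or_lt_of_le ht1 with rfl | h
    · simpa using hp0
    · have : 0 < 1 - t := by linarith
      positivity
  have hle : p * q ≤ ((1-t)*p + t*q) * ((1-t)*q + t*p) := by nlinarith [sq_nonneg (q - p), mul_nonneg ht0 (by linarith : (0:ℝ) ≤ 1 - t), sq_nonneg (q+p)]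
  rw [← Real.log_mul hp0.ne' hq0.ne', ← Real.log_mul hc1.ne' hc2.ne']
  exact Real.log_le_log (by positivity) hle



lemma hybridG_eq {K : ℕ} (α γ : ℝ) (β L p : Fin K → ℝ) :
    hybridG α γ β L p = ∑ i, (L i * p i + β i * psiFn α (p i) - γ * Real.log (p i)) := by
  simp only [hybridG, psiFn, Finset.mul_sum]
  rw [← Finset.sum_add_distrib, ← Finset.sum_sub_distrib]


set_option maxHeartbeats 1000000 in
/-- **Lemma 11 (coordinate-wise SPM: stability under a one-coordinate loss
perturbation).** If `γ ≥ 6`, `h ∈ [−1,1]`, `x'₁ > 0` with `4x'₁ ≥ x₁`, and `x`,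
`y` minimize `G_{L,β,γ}`, `G_{L+(h/x'₁)e₁,β,γ}` respectively, then `y₁ ≤ 3x₁`. -/
theorem stmt15 {K : ℕ} (hK : 2 ≤ K) (α γ h x1' : ℝ)
    (hα : α ∈ Set.Ioo (0:ℝ) 1) (hγ : 6 ≤ γ)
    (hh : h ∈ Set.Icc (-1:ℝ) 1)
    (L x y β : Fin K → ℝ) (hβ : ∀ i, 0 < β i)
    (hx1' : 0 < x1') (h4 : 4 * x1' ≥ x ⟨0, by omega⟩)
    (hx : MinimizesG α γ β L x)
    (hy : MinimizesG α γ β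
      (fun i => L i + (h / x1') * (if (i : ℕ) = 0 then 1 else 0)) y) :
    y ⟨0, by omega⟩ ≤ 3 * x ⟨0, by omega⟩ := by
  obtain ⟨hα0, hα1⟩ := hα
  obtain ⟨hh1, hh2⟩ := hh
  set i0 : Fin K := ⟨0, by omega⟩ with hi0
  by_contra hcon
  push_neg at hcon
  set a : ℝ := x i0 with ha_def
  set b : ℝ := y i0 with hb_def
  have ha0 : 0 < a := (hx.1.1 i0).1
  have ha1 : a < 1 := (hx.1.1 i0).2
  have hb0 : 0 < b := (hy.1.1 i0).1
  have hb1 : b < 1 := (hy.1.1 i0).2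
  have h3ab : 3 * a < b := hcon
  have hab : a < b := by linarith
  set d : ℝ := b - a with hd_def
  have hd0 : 0 < d := by simp only [hd_def]; linarith
  set t : ℝ := (b - 3*a) * a / (8 * b^2) with ht_def
  have ht0 : 0 < t := by
    apply div_pos
    · nlinarith
    · positivity
  have ht8 : t ≤ 1/8 := by
    rw [ht_def, div_le_iff₀ (by positivity)]
    nlinarith
  have ht1 : t < 1 := by linarith
  set L' : Fin K → ℝ := fun i => L i + (h / x1') * (if (i : ℕ) = 0 then 1 else 0) with hL'
  set xt : Fin K → ℝ := fun i => (1-t) * x i + t * y i with hxt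
  set yt : Fin K → ℝ := fun i => (1-t) * y i + t * x i with hyt
  have hmix : ∀ (p q : Fin K → ℝ), openSimplex p → openSimplex q →
      openSimplex (fun i => (1-t) * p i + t * q i) := by
    intro p q hp hq
    have ht1' : 0 < 1 - t := by linarith
    constructor
    · intro i
      constructor
      · show 0 < (1-t) * p i + t * q i
        have := mul_pos ht1' (hp.1 i).1
        have := mul_pos ht0 (hq.1 i).1
        linarith
      · show (1-t) * p i + t * q i < 1
        have := mul_lt_mul_of_pos_left (hp.1 i).2 ht1'
        have := mul_lt_mul_of_pos_left (hq.1 i).2 ht0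
        nlinarith
    · show ∑ i, ((1-t) * p i + t * q i) = 1
      rw [Finset.sum_add_distrib, ← Finset.mul_sum, ← Finset.mul_sum, hp.2, hq.2]; ring
  have hxt_mem : openSimplex xt := hmix x y hx.1 hy.1
  have hyt_mem : openSimplex yt := hmix y x hy.1 hx.1
  have h1 := hx.2 xt hxt_mem
  have h2 := hy.2 yt hyt_mem
  rw [hybridG_eq, hybridG_eq] at h1 h2
  -- combine into a single sum
  set c : Fin K → ℝ := fun i =>
    (L i * xt i + β i * psiFn α (xt i) - γ * Real.log (xt i))
    + (L' i * yt i + β i * psiFn α (yt i) - γ * Real.log (yt i))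
    - (L i * x i + β i * psiFn α (x i) - γ * Real.log (x i))
    - (L' i * y i + β i * psiFn α (y i) - γ * Real.log (y i)) with hc
  have hsum : 0 ≤ ∑ i, c i := by
    simp only [hc]
    rw [Finset.sum_sub_distrib, Finset.sum_sub_distrib, Finset.sum_add_distrib]
    linarith [h1, h2]
  -- the bound function
  set B : ℝ := t * d / x1' - γ * (Real.log (xt i0) + Real.log (yt i0) - Real.log a - Real.log b)
    with hB
  have hγ0 : (0:ℝ) ≤ γ := by linarith
  have hcle : ∀ i : Fin K, c i ≤ (if i = i0 then B else 0) := by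
    intro i
    have hpx := hx.1.1 i
    have hpy := hy.1.1 i
    have hψ : psiFn α (xt i) + psiFn α (yt i) ≤ psiFn α (x i) + psiFn α (y i) :=
      psi_pair hα0 hα1 hpx.1 hpx.2 hpy.1 hpy.2 ht0.le ht1.le
    have hβψ : β i * psiFn α (xt i) + β i * psiFn α (yt i)
        - β i * psiFn α (x i) - β i * psiFn α (y i) ≤ 0 := by
      have := mul_le_mul_of_nonneg_left hψ (hβ i).le
      nlinarith [this]
    by_cases hi : i = i0
    · rw [if_pos hi]
      simp only [hc, hi]
      have hL'0 : L' i0 = L i0 + h / x1' := by simp [hL', hi0]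
      have e1 : xt i0 = (1-t)*a + t*b := rfl
      have e2 : yt i0 = (1-t)*b + t*a := rfl
      have hlin0 : L i0 * xt i0 + L' i0 * yt i0 - L i0 * x i0 - L' i0 * y i0
          = -(h / x1' * (t * d)) := by
        rw [hL'0, e1, e2, hd_def, ← ha_def, ← hb_def]; ring
      have hkey : (-h) * (t * d / x1') ≤ 1 * (t * d / x1') :=
        mul_le_mul_of_nonneg_right (by linarith) (by positivity)
      have hψ0 : β i0 * psiFn α (xt i0) + β i0 * psiFn α (yt i0)
          - β i0 * psiFn α (x i0) - β i0 * psiFn α (y i0) ≤ 0 := by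
        rw [hi] at hβψ; exact hβψ
      rw [hB]
      have hfield : -(h / x1' * (t * d)) = (-h) * (t * d / x1') := by ring
      have hfield2 : t * d / x1' = 1 * (t * d / x1') := by ring
      linarith [hlin0, hψ0, hkey]
    · rw [if_neg hi]
      simp only [hc]
      have hv : (i:ℕ) ≠ 0 := by
        intro hv
        exact hi (Fin.ext (by simp [hi0, hv]))
      have hL'i : L' i = L i := by simp [hL', hv]
      have hlin : L i * xt i + L i * yt i - L i * x i - L i * y i = 0 := by
        show L i * ((1-t) * x i + t * y i) + L i * ((1-t) * y i + t * x i)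
          - L i * x i - L i * y i = 0
        ring
      have hlog : Real.log (x i) + Real.log (y i) ≤ Real.log (xt i) + Real.log (yt i) :=
        log_pair hpx.1 hpy.1 ht0.le ht1.le
      have hlogγ := mul_le_mul_of_nonneg_left hlog hγ0
      rw [hL'i]
      nlinarith [hβψ, hlogγ, hlin]
  have hB0 : 0 ≤ B := by
    calc (0:ℝ) ≤ ∑ i, c i := hsum
    _ ≤ ∑ i : Fin K, (if i = i0 then B else 0) := Finset.sum_le_sum (fun i _ => hcle i)
    _ = B := by simp
  -- extract the log inequality
  set s' : ℝ := t * (1-t) * d^2 with hs'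
  have hs'0 : 0 < s' := by
    rw [hs']
    exact mul_pos (mul_pos ht0 (by linarith)) (pow_pos hd0 2)
  have habpos : 0 < a * b := mul_pos ha0 hb0
  have hXpos : 0 < a * b + s' := by linarith
  have e1 : xt i0 = (1-t)*a + t*b := rfl
  have e2 : yt i0 = (1-t)*b + t*a := rfl
  have hc1 : 0 < (1-t)*a + t*b := by nlinarith
  have hc2 : 0 < (1-t)*b + t*a := by nlinarith
  have hprod : ((1-t)*a + t*b) * ((1-t)*b + t*a) = a*b + s' := by
    rw [hs', hd_def]; ring
  have hlogxy : Real.log (xt i0) + Real.log (yt i0) = Real.log (a*b + s') := by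
    rw [e1, e2, ← Real.log_mul hc1.ne' hc2.ne', hprod]
  have hlogab : Real.log a + Real.log b = Real.log (a*b) :=
    (Real.log_mul ha0.ne' hb0.ne').symm
  have hmain : γ * (Real.log (a*b + s') - Real.log (a*b)) ≤ t * d / x1' := by
    rw [hB] at hB0
    have hEq : γ * (Real.log (a*b + s') - Real.log (a*b))
        = γ * (Real.log (xt i0) + Real.log (yt i0) - Real.log a - Real.log b) := by
      congr 1
      linarith [hlogxy, hlogab]
    rw [hEq]
    linarith [hB0]
  have hlb : s' / (a*b + s') ≤ Real.log (a*b + s') - Real.log (a*b) := by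
    have h7 := Real.log_le_sub_one_of_pos (show 0 < (a*b) / (a*b + s') by positivity)
    rw [Real.log_div habpos.ne' hXpos.ne'] at h7
    have h8 : (a*b) / (a*b + s') - 1 = -(s' / (a*b + s')) := by
      field_simp
      ring
    linarith
  have hstep : γ * (s' / (a*b + s')) ≤ 4 * t * d / a := by
    have l1 := mul_le_mul_of_nonneg_left hlb hγ0
    have l2 : t * d / x1' ≤ 4 * t * d / a := by
      rw [div_le_div_iff₀ hx1' ha0]
      nlinarith [mul_le_mul_of_nonneg_left h4 (mul_pos ht0 hd0).le]
    linarith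
  have hfin : γ * s' * a ≤ 4 * t * d * (a*b + s') := by
    rw [mul_div_assoc'] at hstep
    rw [div_le_div_iff₀ hXpos ha0] at hstep
    linarith [hstep]
  -- final contradiction
  have hfin6 : 6*(1-t)*d*a ≤ 4*a*b + 4*t*(1-t)*d^2 := by
    have hpos : 0 < t * d := mul_pos ht0 hd0
    have key : 6*s'*a ≤ 4*t*d*(a*b+s') := by
      linarith [hfin,
        mul_nonneg (mul_nonneg (show (0:ℝ) ≤ γ - 6 by linarith) hs'0.le) ha0.le]
    refine le_of_mul_le_mul_right ?_ hpos
    calc 6*(1-t)*d*a*(t*d) = 6*s'*a := by rw [hs']; ring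
      _ ≤ 4*t*d*(a*b+s') := key
      _ = (4*a*b + 4*t*(1-t)*d^2)*(t*d) := by rw [hs']; ring
  have hd_b : d ≤ b := by rw [hd_def]; linarith
  have step1 : 4*t*(1-t)*d^2 ≤ 4*t*b^2 := by
    have hb2 : d^2 ≤ b^2 := pow_le_pow_left₀ hd0.le hd_b 2
    have e1 : 0 ≤ t*(b^2 - d^2) := mul_nonneg ht0.le (by linarith only [hb2])
    have e2 : 0 ≤ t*t*d^2 := by positivity
    nlinarith only [e1, e2]
  have step2 : 6*t*d*a ≤ 6*t*a*b := by
    have := mul_le_mul_of_nonneg_left hd_b (mul_nonneg ht0.le ha0.le)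
    nlinarith only [this]
  have step3 : 2*a*(b-3*a) ≤ t*(6*a*b+4*b^2) := by
    have hda : d*a = a*b - a^2 := by rw [hd_def]; ring
    nlinarith only [hfin6, step1, step2, hda]
  have step4 : t*(6*a*b+4*b^2) < 2*a*(b-3*a) := by
    rw [ht_def, div_mul_eq_mul_div, div_lt_iff₀ (by positivity)]
    have hsmall : 6*a*b+4*b^2 < 16*b^2 := by
      have := mul_lt_mul_of_pos_left hab (show (0:ℝ) < 6*b by linarith only [hb0])
      nlinarith only [this, sq_nonneg b]
    have hkey := mul_lt_mul_of_pos_left hsmall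
      (mul_pos (show (0:ℝ) < b - 3*a by linarith only [h3ab]) ha0)
    nlinarith only [hkey]
  linarith only [step3, step4]
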